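/- arXiv:2204.07827 — 6 statements merged into one kernel-verified Lean document; each statement's English description precedes it below -/
import Mathlib

section
/- For every constant ε ∈ (0,1) and every constant δ > 0 there exists a constant C = C(ε, δ) > 0 such that the following holds. Let d = d(n) ≥ 1 + δ, let p = d/n, and let k = k(n) ≤ n^{1−ε}. Then with high probability the random graph G = G(n, p) satisfies, simultaneously for every m ≤ k, t_m(G) ≤ 3 + C · m · log d / log n. -/
open MeasureTheory Filter

noncomputable section

/-- `G` has a tree decomposition of width at most `w`. -/
def HasTDWidth {V : Type} (G : SimpleGraph V) (w : ℕ) : Prop :=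
  ∃ (ι : Type) (t : SimpleGraph ι) (bag : ι → Finset V),
    t.IsTree ∧
    (∀ v : V, ∃ i, v ∈ bag i) ∧
    (∀ u v : V, G.Adj u v → ∃ i, u ∈ bag i ∧ v ∈ bag i) ∧
    (∀ v : V, (t.induce {i | v ∈ bag i}).Connected) ∧
    (∀ i, (bag i).card ≤ w + 1)

/-- The treewidth of a graph: the least width of a tree decomposition. -/
def treewidth {V : Type} (G : SimpleGraph V) : ℕ := sInf {w | HasTDWidth G w}

/-- Local treewidth `t_k(G)`: the largest treewidth of a subgraph of `G` on `k` vertices. -/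
def localTreewidth {V : Type} (G : SimpleGraph V) (k : ℕ) : ℕ :=
  sSup {w | ∃ (s : Set V) (H : SimpleGraph s), s.ncard = k ∧ H ≤ G.induce s ∧ treewidth H = w}

/-- The graph on `Fin n` determined by the Boolean edge-indicators `ω`. -/
def graphOf {n : ℕ} (ω : Sym2 (Fin n) → Bool) : SimpleGraph (Fin n) where
  Adj u v := u ≠ v ∧ ω s(u, v) = true
  symm := ⟨fun u v h => ⟨h.1.symm, by rw [Sym2.eq_swap]; exact h.2⟩⟩
  loopless := ⟨fun u h => h.1 rfl⟩

/-- The product Bernoulli(p) measure on edge indicators: each possible edge appears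
independently with probability `p`.  Together with `graphOf`, this realizes the
binomial random graph `G(n, p)`. -/
def edgeMeasure (n : ℕ) (p : ℝ) : Measure (Sym2 (Fin n) → Bool) :=
  Measure.pi fun _ => (PMF.bernoulli (min (Real.toNNReal p) 1) (min_le_right _ _)).toMeasure

/-!
A graph in which every vertex set `S` spans at most `|S| + t` edges has treewidth at most `t + 2`:
take a BFS spanning tree of every component, hang all component roots below one of them, and let
the bag of `v` consist of `v`, its parent and one endpoint of each non-tree edge of its component;
a component `S` has `|S| - 1` tree edges, so at most `t + 1` non-tree edges.

So it suffices that in `G(n, d/n)` w.h.p. every set of `m ≤ n^(1-ε)` vertices spans at most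
`m + T m` edges with `T m ≈ C m log d / log n`. If `d ≤ n^(ε/4)`, the expected number of
violating sets is at most `∑ₘ C(n, m) C(m², m + T m + 1) (d/n)^(m + T m + 1) ≤ ∑ₘ 2⁻ᵐ n^(-ε/4)`,
because every edge beyond the first `m` costs a factor `e m d / n ≤ n^(-ε/2)`. If `d > n^(ε/4)`,
the bound exceeds `m` and is implied by the trivial `t_m ≤ m`.
-/

open Finset SimpleGraph

namespace HasTDWidth

variable {V : Type}

lemma mono {G : SimpleGraph V} {w w' : ℕ} (h : HasTDWidth G w) (hw : w ≤ w') :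
    HasTDWidth G w' := by
  obtain ⟨ι, t, bag, ht, hv, he, hc, hcard⟩ := h
  exact ⟨ι, t, bag, ht, hv, he, hc, fun i => (hcard i).trans (by omega)⟩

lemma of_fintype_card [Fintype V] (G : SimpleGraph V) : HasTDWidth G (Fintype.card V) := by
  refine ⟨PUnit, ⊥, fun _ => univ, .of_subsingleton, fun v => ⟨.unit, mem_univ v⟩,
    fun u v _ => ⟨.unit, mem_univ u, mem_univ v⟩, fun v => ?_, fun _ => by simp⟩
  have : Nonempty {i : PUnit | v ∈ univ} := ⟨⟨.unit, mem_univ v⟩⟩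
  exact (IsTree.of_subsingleton).connected

lemma treewidth_le {G : SimpleGraph V} {w : ℕ} (h : HasTDWidth G w) : treewidth G ≤ w :=
  Nat.sInf_le h

end HasTDWidth

lemma localTreewidth_le {V : Type} {G : SimpleGraph V} {m w : ℕ}
    (h : ∀ (s : Set V) (H : SimpleGraph s), s.ncard = m → H ≤ G.induce s →
      treewidth H ≤ w) :
    localTreewidth G m ≤ w :=
  csSup_le' fun _ ⟨s, H, hs, hH, hw⟩ => hw ▸ h s H hs hH

lemma localTreewidth_le_self {V : Type} [Finite V] (G : SimpleGraph V) (m : ℕ) :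
    localTreewidth G m ≤ m :=
  localTreewidth_le fun s H hs _ => by
    have := Fintype.ofFinite s
    rw [← hs, Set.ncard_eq_toFinset_card', Set.toFinset_card]
    exact (HasTDWidth.of_fintype_card H).treewidth_le

open Classical in
def edgeCount {V : Type} (G : SimpleGraph V) (S : Finset V) : ℕ :=
  #{e ∈ S.sym2 | e ∈ G.edgeSet}

structure ParentFn (V : Type) where
  parent : V → V
  rank : V → ℕ
  root : V
  parent_root : parent root = root
  rank_parent_lt : ∀ v ≠ root, rank (parent v) < rank v

namespace ParentFn

variable {V : Type} (P : ParentFn V)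

def graph : SimpleGraph V := fromRel fun v w => P.parent v = w

lemma parent_ne {v : V} (hv : v ≠ P.root) : P.parent v ≠ v :=
  fun h => (P.rank_parent_lt v hv).ne (congrArg P.rank h)

lemma graph_adj_parent {v : V} (hv : v ≠ P.root) : P.graph.Adj v (P.parent v) :=
  (fromRel_adj _ _ _).2 ⟨(P.parent_ne hv).symm, .inl rfl⟩

lemma reachable_root (v : V) : P.graph.Reachable v P.root := by
  induction v using (measure P.rank).wf.induction with
  | _ v ih =>
    by_cases hv : v = P.root
    · exact hv ▸ .rfl
    · exact (P.graph_adj_parent hv).reachable.trans (ih _ (P.rank_parent_lt v hv))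

lemma parentEdge_injOn : Set.InjOn (fun v => s(v, P.parent v)) {P.root}ᶜ := by
  intro u hu w hw h
  rcases Sym2.eq_iff.1 h with ⟨h, -⟩ | ⟨h₁, h₂⟩
  · exact h
  · have hu' := P.rank_parent_lt u hu
    have hw' := P.rank_parent_lt w hw
    rw [h₂] at hu'
    rw [← h₁] at hw'
    omega

lemma graph_edgeSet : P.graph.edgeSet = (fun v => s(v, P.parent v)) '' {P.root}ᶜ := by
  ext e
  induction e using Sym2.ind with
  | _ a b =>
    simp only [mem_edgeSet, graph, fromRel_adj, Set.mem_image, Set.mem_compl_singleton_iff]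
    constructor
    · rintro ⟨hab, rfl | rfl⟩
      · exact ⟨a, fun h => hab (by rw [h, P.parent_root]), rfl⟩
      · exact ⟨b, fun h => hab (by rw [h, P.parent_root]), Sym2.eq_swap⟩
    · rintro ⟨v, hv, he⟩
      rcases Sym2.eq_iff.1 he with ⟨rfl, rfl⟩ | ⟨rfl, rfl⟩
      · exact ⟨(P.parent_ne hv).symm, .inl rfl⟩
      · exact ⟨P.parent_ne hv, .inr rfl⟩

lemma graph_isTree [Finite V] : P.graph.IsTree := by
  have : Nonempty V := ⟨P.root⟩
  refine isTree_iff_connected_and_card.2 ⟨?_, ?_⟩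
  · exact .mk fun u v => (P.reachable_root u).trans (P.reachable_root v).symm
  · rw [Nat.card_coe_set_eq, graph_edgeSet, P.parentEdge_injOn.ncard_image,
      Set.ncard_compl, Set.ncard_singleton]
    have := Nat.card_pos (α := V)
    omega

-- Each class `{u | c u = κ}` is then a subtree of `P.graph` rooted at `κ`.
structure IsClassMap (c : V → V) : Prop where
  map_root : c P.root = P.root
  map_parent : ∀ v, c v ≠ v → c (P.parent v) = c v

variable {P} {c : V → V}

lemma IsClassMap.map_map (hc : P.IsClassMap c) (v : V) : c (c v) = c v := by
  induction v using (measure P.rank).wf.induction with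
  | _ v ih =>
    by_cases hv : c v = v
    · rwa [hv]
    · rw [← hc.map_parent v hv]
      exact ih _ (P.rank_parent_lt v fun h => hv (h ▸ hc.map_root))

lemma IsClassMap.induce_reachable (hc : P.IsClassMap c) {A : Set V} {κ : V}
    (hA : ∀ u, c u = κ → u ∈ A) {u : V} (hu : c u = κ) :
    (P.graph.induce A).Reachable ⟨u, hA u hu⟩ ⟨κ, hA κ (hu ▸ hc.map_map u)⟩ := by
  induction u using (measure P.rank).wf.induction with
  | _ u ih =>
    by_cases hcu : c u = u
    · subst hu
      simp only [hcu]
      rfl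
    · have hr : u ≠ P.root := fun h => hcu (h ▸ hc.map_root)
      have hadj : (P.graph.induce A).Adj ⟨u, hA u hu⟩
          ⟨P.parent u, hA _ (hc.map_parent u hcu ▸ hu)⟩ := by
        simpa using P.graph_adj_parent hr
      exact hadj.reachable.trans (ih _ (P.rank_parent_lt u hr) ((hc.map_parent u hcu).trans hu))

theorem hasTDWidth_of_isClassMap [Finite V] {H : SimpleGraph V} (hc : P.IsClassMap c)
    (X : V → Finset V) {w : ℕ} (hX : ∀ u v, c u = c v → X u = X v)
    (hXc : ∀ v, ∀ x ∈ X v, c x = c v)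
    (hH : ∀ u v, H.Adj u v → P.parent u = v ∨ P.parent v = u ∨ u ∈ X v ∨ v ∈ X u)
    (hXw : ∀ v, #(X v) + 1 ≤ w) : HasTDWidth H w := by
  classical
  set bag : V → Finset V := fun v => insert v (insert (P.parent v) (X v))
  refine ⟨V, P.graph, bag, P.graph_isTree, fun v => ⟨v, by simp [bag]⟩, ?_, fun x => ?_,
    fun v => ?_⟩
  · intro u v huv
    rcases hH u v huv with h | h | h | h
    · exact ⟨u, by simp [bag, h]⟩
    · exact ⟨v, by simp [bag, h]⟩
    · exact ⟨v, by simp [bag, h]⟩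
    · exact ⟨u, by simp [bag, h]⟩
  · have hx : x ∈ bag x := by simp [bag]
    suffices h : ∀ i (hi : x ∈ bag i),
        (P.graph.induce {i | x ∈ bag i}).Reachable ⟨i, hi⟩ ⟨x, hx⟩ from
      @Connected.mk _ _ (fun a b => (h a.1 a.2).trans (h b.1 b.2).symm) ⟨⟨x, hx⟩⟩
    intro i hi
    simp only [bag, mem_insert] at hi
    rcases hi with rfl | rfl | hxi
    · rfl
    · by_cases hi : P.parent i = i
      · simp only [hi]
        rfl
      · refine SimpleGraph.Adj.reachable ?_
        simpa [graph, fromRel_adj] using Ne.symm hi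
    · have hA : ∀ u, c u = c i → x ∈ bag u := fun u hu => by simp [bag, hX u i hu, hxi]
      exact (hc.induce_reachable hA rfl).trans (hc.induce_reachable hA (hXc i x hxi)).symm
  · calc #(bag v) ≤ #(X v) + 2 := (card_insert_le _ _).trans (by grind [card_insert_le])
      _ ≤ w + 1 := by have := hXw v; omega

lemma IsClassMap.card_add_card_le_edgeCount [Fintype V] [DecidableEq V] (hc : P.IsClassMap c)
    {H : SimpleGraph V} (hP : ∀ v, c v ≠ v → H.Adj v (P.parent v)) {κ : V} (hκ : c κ = κ)
    {E : Finset (Sym2 V)} (hE : ∀ e ∈ E, e ∈ H.edgeSet ∧ ∀ x ∈ e, c x = κ)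
    (hEP : ∀ e ∈ E, ∀ v, e ≠ s(v, P.parent v)) :
    #E + #({u | c u = κ} : Finset V) ≤ edgeCount H {u | c u = κ} + 1 := by
  classical
  set S : Finset V := {u | c u = κ}
  have hS : ∀ {u}, u ∈ S ↔ c u = κ := by simp [S]
  have hne : ∀ u ∈ S.erase κ, c u ≠ u := fun u hu h =>
    (mem_erase.1 hu).1 (h ▸ hS.1 (mem_erase.1 hu).2)
  set F := (S.erase κ).image fun u => s(u, P.parent u)
  have hF : #F + 1 = #S := by
    rw [card_image_of_injOn, card_erase_add_one (hS.2 hκ)]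
    refine P.parentEdge_injOn.mono fun u hu (h : u = P.root) => hne u hu ?_
    rw [h, hc.map_root]
  have hsub : E ∪ F ⊆ {e ∈ S.sym2 | e ∈ H.edgeSet} := by
    refine union_subset (fun e he => ?_) (fun e he => ?_)
    · exact mem_filter.2 ⟨mem_sym2_iff.2 fun x hx => hS.2 ((hE e he).2 x hx), (hE e he).1⟩
    · obtain ⟨u, hu, rfl⟩ := mem_image.1 he
      have hcu : c u = κ := hS.1 (mem_of_mem_erase hu)
      refine mem_filter.2 ⟨mk_mem_sym2_iff.2 ⟨hS.2 hcu, hS.2 ?_⟩, hP u (hne u hu)⟩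
      rw [hc.map_parent u (hne u hu), hcu]
  have hdisj : Disjoint E F := disjoint_left.2 fun e he hF => by
    obtain ⟨u, -, rfl⟩ := mem_image.1 hF
    exact hEP _ he u rfl
  calc #E + #S = #(E ∪ F) + 1 := by rw [card_union_of_disjoint hdisj]; omega
    _ ≤ edgeCount H S + 1 := by grw [card_le_card hsub]; rfl

end ParentFn

lemma SimpleGraph.Reachable.exists_adj_dist_lt {V : Type} {G : SimpleGraph V} {u v : V}
    (h : G.Reachable u v) (hne : u ≠ v) : ∃ w, G.Adj u w ∧ G.dist w v < G.dist u v := by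
  obtain ⟨p, hp⟩ := h.exists_walk_length_eq_dist
  cases p with
  | nil => exact absurd rfl hne
  | cons hadj q =>
    refine ⟨_, hadj, ?_⟩
    have := dist_le q
    rw [Walk.length_cons] at hp
    omega

theorem exists_parentFn_isClassMap {V : Type} [Nonempty V] (H : SimpleGraph V) :
    ∃ (P : ParentFn V) (c : V → V), P.IsClassMap c ∧ (∀ u v, H.Adj u v → c u = c v) ∧
      ∀ v, c v ≠ v → H.Adj v (P.parent v) := by
  classical
  set c : V → V := fun v => (H.connectedComponentMk v).out
  have hc_mk : ∀ v, H.connectedComponentMk (c v) = H.connectedComponentMk v :=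
    fun v => Quot.out_eq _
  have hc_adj : ∀ u v, H.Adj u v → c u = c v := fun u v h =>
    congrArg Quot.out (ConnectedComponent.connectedComponentMk_eq_of_adj h)
  have hcc : ∀ v, c (c v) = c v := fun v => congrArg Quot.out (hc_mk v)
  have hcloser : ∀ v, c v ≠ v → ∃ w, H.Adj v w ∧ H.dist w (c v) < H.dist v (c v) :=
    fun v hv => (ConnectedComponent.exact (hc_mk v)).symm.exists_adj_dist_lt (Ne.symm hv)
  choose! next hnext_adj hnext_dist using hcloser
  set r₀ := c (Classical.arbitrary V)
  have hr₀ : c r₀ = r₀ := hcc _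
  set parent : V → V := fun v => if c v = v then r₀ else next v
  have hparent : ∀ v, c v ≠ v → parent v = next v := fun v hv => if_neg hv
  let P : ParentFn V :=
    { parent
      rank := fun v => H.dist v (c v) + if c v = r₀ then 0 else 1
      root := r₀
      parent_root := if_pos hr₀
      rank_parent_lt := fun v hv => by
        by_cases hcv : c v = v
        · simp [parent, hcv, hr₀, hv]
        · have := hnext_dist v hcv
          simp only [hparent v hcv, ← hc_adj _ _ (hnext_adj v hcv)]
          omega }
  refine ⟨P, c, ⟨hr₀, fun v hv => ?_⟩, hc_adj, fun v hv => ?_⟩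
  · simp only [P, hparent v hv]
    exact (hc_adj _ _ (hnext_adj v hv)).symm
  · simpa only [P, hparent v hv] using hnext_adj v hv

lemma SimpleGraph.apply_eq_of_mem_edgeSet {V α : Type*} {G : SimpleGraph V} {f : V → α}
    (hf : ∀ u v, G.Adj u v → f u = f v) {e : Sym2 V} (he : e ∈ G.edgeSet) {x y : V}
    (hx : x ∈ e) (hy : y ∈ e) : f x = f y := by
  induction e using Sym2.ind with
  | _ a b =>
    have hab := hf a b he
    rcases Sym2.mem_iff.1 hx with rfl | rfl <;> rcases Sym2.mem_iff.1 hy with rfl | rfl <;>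
      simp [hab]

theorem hasTDWidth_of_edgeCount_le {V : Type} [Fintype V] (H : SimpleGraph V) {t : ℕ}
    (hH : ∀ S : Finset V, edgeCount H S ≤ #S + t) : HasTDWidth H (t + 2) := by
  classical
  cases isEmpty_or_nonempty V
  · exact (HasTDWidth.of_fintype_card H).mono (by simp)
  obtain ⟨P, c, hc, hc_adj, hP⟩ := exists_parentFn_isClassMap H
  let extra (κ : V) : Finset (Sym2 V) :=
    {e ∈ H.edgeFinset | (∀ v, e ≠ s(v, P.parent v)) ∧ c e.out.1 = κ}
  have hextra : ∀ κ, ∀ e ∈ extra κ, e ∈ H.edgeSet ∧ ∀ x ∈ e, c x = κ := by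
    intro κ e he
    simp only [extra, mem_filter, mem_edgeFinset] at he
    exact ⟨he.1, fun x hx =>
      (apply_eq_of_mem_edgeSet hc_adj he.1 hx (Sym2.out_fst_mem e)).trans he.2.2⟩
  refine P.hasTDWidth_of_isClassMap hc (fun v => (extra (c v)).image fun e => e.out.1)
    (fun u v h => by simp only [h]) (fun v x hx => ?_) (fun u v huv => ?_) (fun v => ?_)
  · obtain ⟨e, he, rfl⟩ := mem_image.1 hx
    exact (hextra _ e he).2 _ (Sym2.out_fst_mem e)
  · by_cases hpe : ∃ w, s(u, v) = s(w, P.parent w)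
    · obtain ⟨w, hw⟩ := hpe
      rcases Sym2.eq_iff.1 hw with ⟨rfl, rfl⟩ | ⟨rfl, rfl⟩
      · exact .inl rfl
      · exact .inr (.inl rfl)
    rw [not_exists] at hpe
    have hmem : ∀ κ, c u = κ → s(u, v) ∈ extra κ := fun κ hκ => by
      refine mem_filter.2 ⟨mem_edgeFinset.2 huv, hpe, ?_⟩
      rw [← hκ]
      exact apply_eq_of_mem_edgeSet hc_adj huv (Sym2.out_fst_mem _) (Sym2.mem_mk_left u v)
    rcases Sym2.mem_iff.1 (Sym2.out_fst_mem s(u, v)) with h | h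
    · exact .inr (.inr (.inl (mem_image.2 ⟨_, hmem _ (hc_adj u v huv), h⟩)))
    · exact .inr (.inr (.inr (mem_image.2 ⟨_, hmem _ rfl, h⟩)))
  · have := hc.card_add_card_le_edgeCount hP (hc.map_map v) (hextra (c v))
      (fun e he => (mem_filter.1 he).2.1)
    have := hH {u | c u = c v}
    have : 0 < #({u | c u = c v} : Finset V) := card_pos.2 ⟨v, by simp⟩
    grw [card_image_le]
    omega

lemma edgeCount_le_edgeCount_map {V : Type} {G : SimpleGraph V} {s : Set V}
    {H : SimpleGraph s} (hH : H ≤ G.induce s) (S : Finset s) :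
    edgeCount H S ≤ edgeCount G (S.map (.subtype _)) := by
  classical
  refine card_le_card_of_injOn (Sym2.map Subtype.val) (fun e he => ?_)
    (Sym2.map.injective Subtype.val_injective).injOn
  induction e using Sym2.ind with
  | _ a b =>
    simp only [coe_filter, Set.mem_ofPred_eq, mk_mem_sym2_iff, mem_edgeSet] at he
    simp only [coe_filter, Set.mem_ofPred_eq, Sym2.map_mk, mk_mem_sym2_iff, mem_edgeSet]
    exact ⟨⟨mem_map_of_mem _ he.1.1, mem_map_of_mem _ he.1.2⟩, hH he.2⟩

def EdgeSparse {V : Type} (G : SimpleGraph V) (k : ℕ) (T : ℕ → ℕ) : Prop :=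
  ∀ S : Finset V, #S ≤ k → edgeCount G S ≤ #S + T #S

lemma localTreewidth_le_of_edgeSparse {V : Type} [Finite V] {G : SimpleGraph V} {k m : ℕ}
    {T : ℕ → ℕ} (hT : Monotone T) (hG : EdgeSparse G k T) (hm : m ≤ k) :
    localTreewidth G m ≤ T m + 2 :=
  localTreewidth_le fun s H hs hH => by
    have := Fintype.ofFinite s
    have hcard : ∀ S : Finset s, #S ≤ m := fun S => by
      rw [← hs, Set.ncard_eq_toFinset_card', Set.toFinset_card]
      exact card_le_univ S
    refine (hasTDWidth_of_edgeCount_le H fun S => ?_).treewidth_le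
    calc edgeCount H S ≤ edgeCount G (S.map (.subtype _)) := edgeCount_le_edgeCount_map hH S
      _ ≤ #S + T #S := by simpa using hG (S.map (.subtype _)) (by simpa using (hcard S).trans hm)
      _ ≤ #S + T m := by grw [hT (hcard S)]

open scoped ENNReal

instance (n : ℕ) (p : ℝ) : IsProbabilityMeasure (edgeMeasure n p) := by
  unfold edgeMeasure
  infer_instance

lemma edgeMeasure_forall_true_le {n : ℕ} (p : ℝ) (E : Finset (Sym2 (Fin n))) :
    edgeMeasure n p {ω | ∀ e ∈ E, ω e = true} ≤ ENNReal.ofReal p ^ #E := by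
  classical
  have hset : {ω : Sym2 (Fin n) → Bool | ∀ e ∈ E, ω e = true} =
      Set.univ.pi fun e => if e ∈ E then {true} else Set.univ := by
    ext ω
    simp only [Set.mem_ofPred_eq, Set.mem_univ_pi]
    exact ⟨fun h e => by split_ifs with he <;> simp [h, he],
      fun h e he => by simpa [he] using h e⟩
  rw [hset, edgeMeasure, Measure.pi_pi]
  simp only [apply_ite, measure_univ, PMF.toMeasure_apply_singleton _ _ (measurableSet_singleton _),
    PMF.bernoulli_apply, cond_true, prod_ite_mem, univ_inter, prod_const]
  exact pow_le_pow_left' (ENNReal.coe_le_coe.2 (min_le_left _ _)) _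

lemma graphOf_edgeSet_subset {n : ℕ} (ω : Sym2 (Fin n) → Bool) :
    (graphOf ω).edgeSet ⊆ {e | ω e = true} := by
  intro e he
  induction e using Sym2.ind with
  | _ a b => exact he.2

lemma setOf_not_edgeSparse_subset (n k : ℕ) (T : ℕ → ℕ) :
    {ω | ¬ EdgeSparse (graphOf ω) k T} ⊆
      ⋃ m ∈ range (k + 1), ⋃ S ∈ powersetCard m (univ : Finset (Fin n)),
        ⋃ E ∈ powersetCard (m + T m + 1) S.sym2, {ω | ∀ e ∈ E, ω e = true} := by
  classical
  intro ω hω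
  simp only [EdgeSparse, Set.mem_ofPred_eq, not_forall, not_le] at hω
  obtain ⟨S, hSk, hS⟩ := hω
  obtain ⟨E, hE, hEcard⟩ := exists_subset_card_eq
    (s := {e ∈ S.sym2 | e ∈ (graphOf ω).edgeSet}) (n := #S + T #S + 1) hS
  simp only [Set.mem_iUnion, mem_range, mem_powersetCard]
  refine ⟨#S, by omega, S, ⟨subset_univ S, rfl⟩, E, ⟨hE.trans (filter_subset _ _), hEcard⟩,
    fun e he => graphOf_edgeSet_subset ω (mem_filter.1 (hE he)).2⟩

lemma Finset.card_sym2_le_mul_self {α : Type*} (S : Finset α) : #S.sym2 ≤ #S * #S := by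
  rw [card_sym2, Nat.choose_two_right, Nat.add_sub_cancel]
  exact Nat.div_le_of_le_mul (by nlinarith)

lemma edgeMeasure_not_edgeSparse_le (n k : ℕ) {p : ℝ} (hp : 0 ≤ p) (T : ℕ → ℕ) :
    edgeMeasure n p {ω | ¬ EdgeSparse (graphOf ω) k T} ≤ ENNReal.ofReal
      (∑ m ∈ range (k + 1), n.choose m * (m * m).choose (m + T m + 1) * p ^ (m + T m + 1)) := by
  set μ := edgeMeasure n p
  calc μ {ω | ¬ EdgeSparse (graphOf ω) k T}
      ≤ ∑ m ∈ range (k + 1), ∑ S ∈ powersetCard m (univ : Finset (Fin n)),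
          ∑ E ∈ powersetCard (m + T m + 1) S.sym2, μ {ω | ∀ e ∈ E, ω e = true} := by
        refine (measure_mono (setOf_not_edgeSparse_subset n k T)).trans
          ((measure_biUnion_finset_le _ _).trans (sum_le_sum fun m _ =>
            (measure_biUnion_finset_le _ _).trans
              (sum_le_sum fun S _ => measure_biUnion_finset_le _ _)))
    _ ≤ ∑ m ∈ range (k + 1), ∑ S ∈ powersetCard m (univ : Finset (Fin n)),
          ∑ E ∈ powersetCard (m + T m + 1) S.sym2, ENNReal.ofReal p ^ (m + T m + 1) := by
        gcongr with m _ S _ E hE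
        rw [← (mem_powersetCard.1 hE).2]
        exact edgeMeasure_forall_true_le p E
    _ ≤ ∑ m ∈ range (k + 1), (n.choose m * (m * m).choose (m + T m + 1) : ℝ≥0∞) *
          ENNReal.ofReal p ^ (m + T m + 1) := by
        refine sum_le_sum fun m _ => (sum_le_card_nsmul _ _
          (((m * m).choose (m + T m + 1) : ℝ≥0∞) * ENNReal.ofReal p ^ (m + T m + 1))
          fun S hS => ?_).trans_eq ?_
        · rw [sum_const, card_powersetCard, nsmul_eq_mul]
          gcongr
          exact (card_sym2_le_mul_self S).trans (by rw [(mem_powersetCard.1 hS).2])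
        · rw [card_powersetCard, card_univ, Fintype.card_fin, nsmul_eq_mul, mul_assoc]
    _ = _ := by
        rw [ENNReal.ofReal_sum_of_nonneg fun m _ => by positivity]
        refine sum_congr rfl fun m _ => ?_
        rw [ENNReal.ofReal_mul (by positivity), ENNReal.ofReal_mul (by positivity),
          ENNReal.ofReal_pow hp, ENNReal.ofReal_natCast, ENNReal.ofReal_natCast]

open Real in
lemma Nat.choose_le_exp_mul_div_pow (N r : ℕ) : (N.choose r : ℝ) ≤ (exp 1 * N / r) ^ r := by
  rcases r.eq_zero_or_pos with rfl | hr
  · simp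
  have hr' : (0 : ℝ) < r := by exact_mod_cast hr
  calc (N.choose r : ℝ) ≤ N ^ r / r.factorial := Nat.choose_le_pow_div r N
    _ = (N / r) ^ r * (r ^ r / r.factorial) := by rw [div_pow]; field_simp
    _ ≤ (N / r) ^ r * exp r := by gcongr; exact pow_div_factorial_le_exp _ hr'.le r
    _ = (exp 1 * N / r) ^ r := by rw [← exp_one_pow, ← mul_pow]; ring

open Real in
lemma choose_mul_choose_mul_pow_le {n m : ℕ} (hn : n ≠ 0) (hm : m ≠ 0) (s : ℕ) {d : ℝ}
    (hd : 0 ≤ d) : n.choose m * (m * m).choose (m + s) * (d / n) ^ (m + s) ≤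
      (exp 2 * d) ^ m * (exp 1 * m * d / n) ^ s := by
  have hn' : (0 : ℝ) < n := by positivity
  have hm' : (0 : ℝ) < m := by positivity
  have hmm : (m * m).choose (m + s) ≤ (exp 1 * m : ℝ) ^ (m + s) := by
    refine (Nat.choose_le_exp_mul_div_pow _ _).trans (pow_le_pow_left₀ (by positivity) ?_ _)
    rw [div_le_iff₀ (by positivity)]
    push_cast
    nlinarith [exp_pos 1, mul_pos (exp_pos 1) hm']
  calc n.choose m * (m * m).choose (m + s) * (d / n) ^ (m + s)
      ≤ (exp 1 * n / m) ^ m * (exp 1 * m) ^ (m + s) * (d / n) ^ (m + s) := by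
        gcongr
        exact Nat.choose_le_exp_mul_div_pow n m
    _ = (exp 1 * n / m * (exp 1 * m) * (d / n)) ^ m * (exp 1 * m * (d / n)) ^ s := by ring
    _ = (exp 2 * d) ^ m * (exp 1 * m * d / n) ^ s := by
        rw [show exp 2 = exp 1 * exp 1 by rw [← exp_add]; norm_num, mul_div_assoc]
        field_simp

open Real in
lemma choose_mul_choose_mul_pow_le_half_pow {ε C d : ℝ} {n m s : ℕ} (hε : 0 < ε)
    (hn : 8 / ε ≤ log n) (hd : 1 ≤ d) (hdn : log d ≤ ε / 4 * log n) (hm : m ≠ 0)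
    (hmn : (m : ℝ) ≤ (n : ℝ) ^ (1 - ε)) (hs : C * m * log d / log n ≤ s) (hs1 : 1 ≤ s)
    (hC : 2 + log 2 ≤ (ε * C / 4 - 1) * log d) :
    n.choose m * (m * m).choose (m + s) * (d / n) ^ (m + s) ≤
      (1 / 2) ^ m * (n : ℝ) ^ (-(ε / 4)) := by
  have hℓ : 0 < log n := lt_of_lt_of_le (by positivity) hn
  have hn0 : (0 : ℝ) < n := by
    rcases Nat.eq_zero_or_pos n with rfl | h
    · simp at hℓ
    · exact_mod_cast h
  have hm0 : (0 : ℝ) < m := by positivity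
  have hd0 : 0 < d := by linarith
  set x := exp 1 * m * d / n
  have hx0 : 0 < x := by positivity
  have hx : log x ≤ -(ε / 2) * log n := by
    have hlogm : log m ≤ (1 - ε) * log n := by
      rw [← log_rpow hn0]
      exact log_le_log hm0 hmn
    have h8 : 8 ≤ ε * log n := by rwa [div_le_iff₀' hε] at hn
    have hlogx : log x = 1 + log m + log d - log n := by
      rw [log_div (by positivity) hn0.ne', log_mul (by positivity) hd0.ne',
        log_mul (by positivity) hm0.ne', log_exp]
    linarith
  have hexp : m * (2 + log d) + s * log x ≤ m * (-log 2) + log n * (-(ε / 4)) := by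
    have h1 : s * log x ≤ s * (-(ε / 2) * log n) :=
      mul_le_mul_of_nonneg_left hx (Nat.cast_nonneg s)
    have h2 : C * m * log d ≤ s * log n := (div_le_iff₀ hℓ).1 hs
    have h3 : (1 : ℝ) ≤ s := by exact_mod_cast hs1
    nlinarith [mul_le_mul_of_nonneg_left hC hm0.le, mul_le_mul_of_nonneg_left h2 hε.le,
      mul_nonneg (sub_nonneg.2 h3) (mul_pos hε hℓ).le]
  calc (n.choose m : ℝ) * (m * m).choose (m + s) * (d / n) ^ (m + s)
      ≤ (exp 2 * d) ^ m * x ^ s :=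
        choose_mul_choose_mul_pow_le (Nat.cast_pos.1 hn0).ne' hm s hd0.le
    _ = exp (m * (2 + log d) + s * log x) := by
        rw [exp_add, exp_nat_mul, exp_nat_mul, exp_add, exp_log hd0, exp_log hx0]
    _ ≤ exp (m * (-log 2) + log n * (-(ε / 4))) := exp_le_exp.2 hexp
    _ = (1 / 2) ^ m * (n : ℝ) ^ (-(ε / 4)) := by
        rw [exp_add, exp_nat_mul, exp_neg, exp_log two_pos, rpow_def_of_pos hn0, one_div]

open Real in
lemma sum_choose_mul_choose_mul_pow_le {ε C d : ℝ} {n k : ℕ} {T : ℕ → ℕ} (hε : 0 < ε)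
    (hn : 8 / ε ≤ log n) (hd : 1 ≤ d) (hdn : log d ≤ ε / 4 * log n)
    (hk : (k : ℝ) ≤ (n : ℝ) ^ (1 - ε)) (hT : ∀ m : ℕ, C * m * log d / log n ≤ T m + 1)
    (hC : 2 + log 2 ≤ (ε * C / 4 - 1) * log d) :
    ∑ m ∈ range (k + 1), n.choose m * (m * m).choose (m + T m + 1) * (d / n) ^ (m + T m + 1) ≤
      2 * (n : ℝ) ^ (-(ε / 4)) := by
  calc ∑ m ∈ range (k + 1), n.choose m * (m * m).choose (m + T m + 1) * (d / n) ^ (m + T m + 1)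
      ≤ ∑ m ∈ range (k + 1), (1 / 2) ^ m * (n : ℝ) ^ (-(ε / 4)) := by
        refine sum_le_sum fun m hm => ?_
        rcases Nat.eq_zero_or_pos m with rfl | hm0
        · simp [Nat.choose_eq_zero_of_lt]
          positivity
        · have hmk : (m : ℝ) ≤ k := by exact_mod_cast Nat.lt_succ_iff.1 (mem_range.1 hm)
          exact choose_mul_choose_mul_pow_le_half_pow hε hn hd hdn hm0.ne' (hmk.trans hk)
            (by exact_mod_cast hT m) (Nat.le_add_left 1 _) hC
    _ = (∑ m ∈ range (k + 1), (1 / 2 : ℝ) ^ m) * (n : ℝ) ^ (-(ε / 4)) := by rw [sum_mul]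
    _ ≤ 2 * (n : ℝ) ^ (-(ε / 4)) := by gcongr; exact sum_geometric_two_le _

open Real in
lemma edgeMeasure_localTreewidth_compl_le {ε C d : ℝ} {n k : ℕ} (hε : 0 < ε)
    (hn : 8 / ε ≤ log n) (hd : 1 ≤ d) (hk : (k : ℝ) ≤ (n : ℝ) ^ (1 - ε))
    (hC : 2 + log 2 ≤ (ε * C / 4 - 1) * log d) :
    edgeMeasure n (d / n) {ω | ∀ m ≤ k,
      (localTreewidth (graphOf ω) m : ℝ) ≤ 3 + C * m * log d / log n}ᶜ ≤
        ENNReal.ofReal (2 * (n : ℝ) ^ (-(ε / 4))) := by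
  have hℓ : 0 < log n := lt_of_lt_of_le (by positivity) hn
  have hlogd : 0 ≤ log d := log_nonneg hd
  have hεC : 4 < ε * C := by
    by_contra! h
    nlinarith [mul_nonpos_of_nonpos_of_nonneg (by linarith : ε * C / 4 - 1 ≤ 0) hlogd,
      log_two_gt_d9]
  have hC0 : 0 < C := pos_of_mul_pos_right (by linarith) hε.le
  by_cases hdn : log d ≤ ε / 4 * log n
  · set T : ℕ → ℕ := fun m => ⌊C * m * log d / log n⌋₊
    have hT : Monotone T := fun a b hab => Nat.floor_le_floor (by gcongr)
    refine (measure_mono ?_).trans ((edgeMeasure_not_edgeSparse_le n k (by positivity) T).trans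
      (ENNReal.ofReal_le_ofReal (sum_choose_mul_choose_mul_pow_le hε hn hd hdn hk
        (fun m => (Nat.lt_floor_add_one _).le) hC)))
    intro ω hω hsparse
    refine hω fun m hm => ?_
    have h1 := localTreewidth_le_of_edgeSparse hT hsparse hm
    have h2 : (T m : ℝ) ≤ C * m * log d / log n := Nat.floor_le (by positivity)
    have h3 : (localTreewidth (graphOf ω) m : ℝ) ≤ T m + 2 := by exact_mod_cast h1
    linarith
  · refine (measure_mono_null (fun ω hω => ?_) measure_empty).trans_le bot_le
    refine hω fun m _ => ?_
    have h1 : (1 : ℝ) ≤ C * (log d / log n) := by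
      have : ε / 4 < log d / log n := by rw [lt_div_iff₀ hℓ]; linarith
      nlinarith
    have h2 : (localTreewidth (graphOf ω) m : ℝ) ≤ m := by
      exact_mod_cast localTreewidth_le_self _ m
    have h3 : (m : ℝ) ≤ C * m * log d / log n := by
      rw [mul_comm C, mul_div_assoc, mul_assoc]
      exact le_mul_of_one_le_right (Nat.cast_nonneg m) h1
    linarith

lemma tendsto_measure_one_of_compl_le {Ω : ℕ → Type*} [∀ n, MeasurableSpace (Ω n)]
    {μ : ∀ n, Measure (Ω n)} [∀ n, IsProbabilityMeasure (μ n)] {s : ∀ n, Set (Ω n)}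
    {v : ℕ → ℝ≥0∞} (hv : Tendsto v atTop (nhds 0))
    (h : ∀ᶠ n in atTop, μ n (s n)ᶜ ≤ v n) :
    Tendsto (fun n => μ n (s n)) atTop (nhds 1) := by
  have hlow : Tendsto (fun n => 1 - v n) atTop (nhds 1) := by
    simpa [Function.comp_def] using
      ((ENNReal.continuous_sub_left ENNReal.one_ne_top).tendsto 0).comp hv
  refine tendsto_of_tendsto_of_tendsto_of_le_of_le' hlow tendsto_const_nhds ?_
    (.of_forall fun n => prob_le_one)
  filter_upwards [h] with n hn
  calc 1 - v n ≤ 1 - μ n (s n)ᶜ := tsub_le_tsub_left hn 1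
    _ ≤ μ n (s n) := by
        rw [tsub_le_iff_right, ← measure_univ (μ := μ n)]
        exact measure_univ_le_add_compl _

/-- For every ε ∈ (0,1) and δ > 0 there is C = C(ε,δ) > 0 such that for
d = d(n) ≥ 1+δ, p = d/n, and k = k(n) ≤ n^(1-ε), w.h.p. the random graph G(n,p)
satisfies, simultaneously for every m ≤ k, t_m(G) ≤ 3 + C·m·log d / log n. -/
theorem local_treewidth_upper_bound_random_graph
    (ε δ : ℝ) (hε : ε ∈ Set.Ioo (0 : ℝ) 1) (hδ : 0 < δ) :
    ∃ C : ℝ, 0 < C ∧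
      ∀ (d : ℕ → ℝ) (k : ℕ → ℕ),
        (∀ n, 1 + δ ≤ d n) →
        (∀ n : ℕ, (k n : ℝ) ≤ (n : ℝ) ^ (1 - ε)) →
        Tendsto
          (fun n : ℕ =>
            edgeMeasure n (d n / n)
              {ω | ∀ m ≤ k n,
                (localTreewidth (graphOf ω) m : ℝ) ≤
                  3 + C * m * Real.log (d n) / Real.log n})
          atTop (nhds 1) := by
  have hε0 := hε.1
  have hlogδ : 0 < Real.log (1 + δ) := Real.log_pos (by linarith)
  refine ⟨4 / ε * (1 + 3 / Real.log (1 + δ)), by positivity, fun d k hd hk => ?_⟩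
  refine tendsto_measure_one_of_compl_le (v := fun n : ℕ => ENNReal.ofReal (2 * n ^ (-(ε / 4))))
    ?_ ?_
  · simpa using ENNReal.tendsto_ofReal (((tendsto_rpow_neg_atTop (by positivity)).comp
      tendsto_natCast_atTop_atTop).const_mul 2)
  · filter_upwards [(Real.tendsto_log_atTop.comp tendsto_natCast_atTop_atTop).eventually_ge_atTop
      (8 / ε)] with n hn
    refine edgeMeasure_localTreewidth_compl_le hε0 hn (by linarith [hd n]) (hk n) ?_
    have hC : ε * (4 / ε * (1 + 3 / Real.log (1 + δ))) / 4 - 1 = 3 / Real.log (1 + δ) := by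
      field_simp
      ring
    rw [hC, div_mul_eq_mul_div, le_div_iff₀ hlogδ]
    nlinarith [Real.log_le_log (by linarith) (hd n), Real.log_two_lt_d9]
end
end

section
/- Let G be a connected graph with n vertices and exactly n − 2 + ℓ edges, where ℓ ≥ 1. Then the treewidth of G is at most ℓ. -/
noncomputable section

/-! Take a spanning tree `T` of `G`; by the edge count, `G` has exactly `ℓ - 1` edges outside `T`,
so some set `X` of at most `ℓ - 1` vertices meets all of them. Rooting `T`, the bags `{v, parent v}`
indexed by `T` itself form a tree decomposition of `T` of width `1`. Adding `X` to every bag keeps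
it a tree decomposition, now of `G`, and raises the width to at most `ℓ`. -/

namespace SimpleGraph

section

variable {V : Type*} {T : SimpleGraph V}

theorem exists_isVertexCover_card_le [Fintype V] (G : SimpleGraph V) :
    ∃ X : Finset V, G.IsVertexCover X ∧ X.card ≤ G.edgeSet.ncard := by
  classical
  obtain ⟨s, hs, hcover⟩ := G.vertexCoverNum_exists
  refine ⟨s.toFinset, by simpa using hcover, ?_⟩
  have hle : s.encard ≤ G.edgeSet.encard := hs ▸ vertexCoverNum_le_encard_edgeSet
  rw [← Set.ncard_eq_toFinset_card', ← Nat.cast_le (α := ℕ∞), s.toFinite.cast_ncard_eq,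
    G.edgeSet.toFinite.cast_ncard_eq]
  exact hle

theorem IsTree.ncard_edgeSet_add_one [Fintype V] (hT : T.IsTree) :
    T.edgeSet.ncard + 1 = Fintype.card V := by
  classical
  rw [Set.ncard_eq_toFinset_card']
  exact hT.card_edgeFinset

namespace IsTree

variable (hT : T.IsTree)

def path (v w : V) : T.Walk v w := (hT.existsUnique_path v w).exists.choose

theorem isPath_path (v w : V) : (hT.path v w).IsPath :=
  (hT.existsUnique_path v w).exists.choose_spec

theorem eq_path_of_isPath {v w : V} {p : T.Walk v w} (hp : p.IsPath) : p = hT.path v w :=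
  (hT.existsUnique_path v w).unique hp (hT.isPath_path v w)

def parent (r v : V) : V := (hT.path v r).snd

theorem parent_self (r : V) : hT.parent r r = r := by
  simp [parent, ← hT.eq_path_of_isPath (Walk.IsPath.nil (u := r))]

theorem adj_parent_of_ne {r v : V} (h : hT.parent r v ≠ v) : T.Adj v (hT.parent r v) := by
  obtain rfl | hv := eq_or_ne v r
  · exact absurd (hT.parent_self v) h
  · exact Walk.adj_snd (Walk.not_nil_of_ne hv)

theorem parent_eq_or_parent_eq_of_adj (r : V) {u v : V} (h : T.Adj u v) :
    hT.parent r u = v ∨ hT.parent r v = u := by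
  classical
  by_cases hv : v ∈ (hT.path u r).support
  · left
    have hedge : s(u, v) ∈ (hT.path u r).edges := by
      apply Walk.edges_takeUntil_subset_edges _ hv
      have hp : (Walk.cons h .nil).IsPath := by simp [h.ne]
      rw [hT.eq_path_of_isPath ((hT.isPath_path u r).takeUntil hv), ← hT.eq_path_of_isPath hp]
      simp
    exact ((hT.isPath_path u r).eq_snd_of_mem_edges hedge).symm
  · right
    have hp : (Walk.cons h.symm (hT.path u r)).IsPath :=
      (Walk.cons_isPath_iff _ _).mpr ⟨hT.isPath_path u r, hv⟩
    rw [parent, ← hT.eq_path_of_isPath hp, Walk.snd_cons]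

end IsTree

end

variable {V : Type} {G H T : SimpleGraph V}

theorem connected_induce_of_forall_adj {s : Set V} {c : V} (hc : c ∈ s)
    (hadj : ∀ v ∈ s, v ≠ c → G.Adj v c) : (G.induce s).Connected := by
  rw [connected_iff_exists_forall_reachable]
  refine ⟨⟨c, hc⟩, fun ⟨v, hv⟩ => ?_⟩
  obtain rfl | hvc := eq_or_ne v c
  · rfl
  · exact (show (G.induce s).Adj ⟨v, hv⟩ ⟨c, hc⟩ from hadj v hv hvc).reachable.symm

theorem IsTree.hasTDWidth_one (hT : T.IsTree) : HasTDWidth T 1 := by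
  classical
  obtain ⟨r⟩ := hT.connected.nonempty
  refine ⟨V, T, fun v => {v, hT.parent r v}, hT, fun v => ⟨v, by simp⟩, fun u v huv => ?_,
    fun w => connected_induce_of_forall_adj (c := w) (by simp) fun v hv hvw => ?_,
    fun v => Finset.card_le_two⟩
  · rcases hT.parent_eq_or_parent_eq_of_adj r huv with h | h
    · exact ⟨u, by simp [h]⟩
    · exact ⟨v, by simp [h]⟩
  · have hparent : hT.parent r v = w := by simpa [Ne.symm hvw, eq_comm] using hv
    exact hparent ▸ hT.adj_parent_of_ne (hparent ▸ hvw.symm)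

theorem _root_.HasTDWidth.of_isVertexCover_sdiff {w k : ℕ} {X : Finset V} (h : HasTDWidth H w)
    (hX : (G \ H).IsVertexCover X) (hk : X.card ≤ k) : HasTDWidth G (w + k) := by
  classical
  obtain ⟨ι, t, bag, ht, hcover, hedge, hconn, hcard⟩ := h
  refine ⟨ι, t, fun i => bag i ∪ X, ht, fun v => ?_, fun u v huv => ?_, fun v => ?_, fun i => ?_⟩
  · obtain ⟨i, hi⟩ := hcover v
    exact ⟨i, Finset.mem_union_left _ hi⟩
  · by_cases hH : H.Adj u v
    · obtain ⟨i, hu, hv⟩ := hedge u v hH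
      exact ⟨i, Finset.mem_union_left _ hu, Finset.mem_union_left _ hv⟩
    · rcases hX ((sdiff_adj _ _ _ _).mpr ⟨huv, hH⟩) with hu | hv
      · obtain ⟨i, hi⟩ := hcover v
        exact ⟨i, Finset.mem_union_right _ hu, Finset.mem_union_left _ hi⟩
      · obtain ⟨i, hi⟩ := hcover u
        exact ⟨i, Finset.mem_union_left _ hi, Finset.mem_union_right _ hv⟩
  · show (t.induce {i | v ∈ bag i ∪ X}).Connected
    by_cases hv : v ∈ X
    · rw [show {i | v ∈ bag i ∪ X} = Set.univ by ext; simp [hv]]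
      exact (induceUnivIso t).connected_iff.mpr ht.connected
    · rw [show {i | v ∈ bag i ∪ X} = {i | v ∈ bag i} by ext; simp [hv]]
      exact hconn v
  · calc (bag i ∪ X).card ≤ (bag i).card + X.card := Finset.card_union_le _ _
      _ ≤ w + k + 1 := by linarith [hcard i]

end SimpleGraph

theorem treewidth_le_of_excess_general {V : Type} [Fintype V] (G : SimpleGraph V) (ℓ : ℕ)
    (hconn : G.Connected)
    (hedges : G.edgeSet.ncard + 2 = Fintype.card V + ℓ) :
    treewidth G ≤ ℓ := by
  obtain ⟨T, hTG, hT⟩ := hconn.exists_isTree_le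
  obtain ⟨X, hX, hXcard⟩ := (G \ T).exists_isVertexCover_card_le
  have hexcess : 1 + (G \ T).edgeSet.ncard = ℓ := by
    have hsub : T.edgeSet ⊆ G.edgeSet := SimpleGraph.edgeSet_mono hTG
    have := Set.ncard_sdiff hsub
    have := Set.ncard_le_ncard hsub
    have := hT.ncard_edgeSet_add_one
    rw [SimpleGraph.edgeSet_sdiff]
    omega
  exact Nat.sInf_le (hexcess ▸ hT.hasTDWidth_one.of_isVertexCover_sdiff hX hXcard)

/-- A connected graph with `n` vertices and exactly `n - 2 + ℓ` edges
(`ℓ ≥ 1`) has treewidth at most `ℓ`. -/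
theorem treewidth_le_of_excess {V : Type} [Fintype V] (G : SimpleGraph V) (ℓ : ℕ)
    (hconn : G.Connected) (hℓ : 1 ≤ ℓ)
    (hedges : G.edgeSet.ncard + 2 = Fintype.card V + ℓ) :
    treewidth G ≤ ℓ :=
  treewidth_le_of_excess_general G ℓ hconn hedges
end
end

section
/- Let G be a forest in which every vertex has a bootstrap-percolation threshold at least 2, and let A be a seed set of size k ≥ 1. Then the number of additional vertices activated from A is strictly less than k, i.e. |⟨A⟩ ∖ A| < k. -/
noncomputable section

/-- One step of bootstrap percolation on `G` with thresholds `t`: to the currently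
infected set `A` we add every vertex having at least `t v` infected neighbors. -/
def bootStep {V : Type} (G : SimpleGraph V) (t : V → ℕ) (A : Set V) : Set V :=
  A ∪ {v : V | t v ≤ (A ∩ G.neighborSet v).ncard}

/-- `⟨A⟩`: the set of vertices eventually infected from the seed set `A` under
bootstrap percolation on `G` with thresholds `t`. -/
def bootClosure {V : Type} (G : SimpleGraph V) (t : V → ℕ) (A : Set V) : Set V :=
  ⋃ i : ℕ, (bootStep G t)^[i] A

/-! Count the edges of `G` spanned by the infected set. A newly infected vertex has at least two
neighbours among the previously infected vertices, and these edges were not spanned before, so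
`C = ⟨A⟩` spans at least `2 |C \ A|` edges. As `G` is a forest, `C` spans at most
`|C| - 1 = |C \ A| + k - 1` edges, whence `|C \ A| < k`. -/

open SimpleGraph Finset

theorem Set.exists_iUnion_iterate_eq_of_finite {α : Type*} [Finite α] {f : Set α → Set α}
    (hf : ∀ s, s ⊆ f s) (s : Set α) : ∃ n, ⋃ i, f^[i] s = f^[n] s := by
  have hmono : Monotone fun i => f^[i] s :=
    monotone_nat_of_le_succ fun i => by
      simpa only [Function.iterate_succ_apply'] using hf (f^[i] s)
  obtain ⟨n, hn⟩ := WellFoundedGT.monotone_chain_condition ⟨_, hmono⟩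
  refine ⟨n, (Set.iUnion_subset fun i => ?_).antisymm (Set.subset_iUnion (f^[·] s) n)⟩
  rcases le_total i n with hin | hni
  · exact hmono hin
  · exact (hn i hni).ge

namespace SimpleGraph

variable {V : Type*} {G : SimpleGraph V}

theorem IsAcyclic.card_edgeFinset_add_one_le [Fintype V] [Nonempty V] [Fintype G.edgeSet]
    (hG : G.IsAcyclic) : #G.edgeFinset + 1 ≤ Fintype.card V := by
  classical
  obtain ⟨T, hGT, -, hT⟩ := connected_top.exists_isTree_le_of_le_of_isAcyclic le_top hG
  rw [← hT.card_edgeFinset]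
  gcongr

variable [Fintype V] [DecidableEq V] [DecidableRel G.Adj]

theorem IsAcyclic.card_edgeFinset_inter_sym2_add_one_le (hG : G.IsAcyclic) {S : Finset V}
    (hS : S.Nonempty) : #(G.edgeFinset ∩ S.sym2) + 1 ≤ #S := by
  have : Nonempty S := hS.coe_sort
  have := (hG.induce S).card_edgeFinset_add_one_le
  rwa [← card_filter_edgeFinset_toFinset_subset, filter_edgeFinset_toFinset_subset,
    ← Set.toFinset_card, toFinset_coe] at this

theorem card_edgeFinset_inter_sym2_add_two_mul_le {B N : Finset V} (hNB : Disjoint N B)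
    (hN : ∀ v ∈ N, 2 ≤ #{w ∈ B | G.Adj v w}) :
    #(G.edgeFinset ∩ B.sym2) + 2 * #N ≤ #(G.edgeFinset ∩ (B ∪ N).sym2) := by
  set F := N.biUnion fun v => {w ∈ B | G.Adj v w}.image (s(v, ·))
  have hF : 2 * #N ≤ #F := by
    rw [card_biUnion]
    · rw [mul_comm, ← smul_eq_mul]
      refine card_nsmul_le_sum _ _ _ fun v hv => ?_
      rw [card_image_of_injective _ fun w w' => Sym2.congr_right.mp]
      exact hN v hv
    · intro v hv v' hv' hvv'
      simp only [Function.onFun, Finset.disjoint_left, mem_image, mem_filter]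
      rintro _ ⟨w, ⟨hw, -⟩, rfl⟩ ⟨w', ⟨hw', -⟩, he⟩
      rcases Sym2.eq_iff.mp he with ⟨rfl, -⟩ | ⟨-, rfl⟩
      · exact hvv' rfl
      · exact hNB.notMem_of_mem_left_finset hv hw'
  have hdisj : Disjoint (G.edgeFinset ∩ B.sym2) F := by
    simp only [F, Finset.disjoint_left, mem_inter, mem_sym2_iff, mem_biUnion, mem_image]
    rintro _ ⟨-, hB⟩ ⟨v, hv, w, -, rfl⟩
    exact hNB.notMem_of_mem_left_finset hv (hB v (Sym2.mem_mk_left v w))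
  have hsub : G.edgeFinset ∩ B.sym2 ∪ F ⊆ G.edgeFinset ∩ (B ∪ N).sym2 := by
    simp only [F, subset_iff, mem_union, mem_inter, mem_sym2_iff, mem_biUnion, mem_image,
      mem_filter, mem_edgeFinset]
    rintro _ (⟨he, hB⟩ | ⟨v, hv, w, ⟨hw, hvw⟩, rfl⟩)
    · exact ⟨he, fun a ha => Or.inl (hB a ha)⟩
    · refine ⟨hvw, fun a ha => ?_⟩
      rcases Sym2.mem_iff.mp ha with rfl | rfl
      exacts [Or.inr hv, Or.inl hw]
  calc #(G.edgeFinset ∩ B.sym2) + 2 * #N ≤ #(G.edgeFinset ∩ B.sym2 ∪ F) := by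
        rw [card_union_of_disjoint hdisj]; omega
    _ ≤ _ := card_le_card hsub

open scoped Classical in
theorem IsAcyclic.ncard_sdiff_lt_of_two_mul_ncard_sdiff_le (hG : G.IsAcyclic) {A C : Set V}
    (hAC : A ⊆ C) (hA : A.Nonempty)
    (hC : 2 * (C \ A).ncard ≤ #(G.edgeFinset ∩ C.toFinset.sym2)) :
    (C \ A).ncard < A.ncard := by
  have hCne : C.toFinset.Nonempty := Set.toFinset_nonempty.mpr (hA.mono hAC)
  have hforest := hG.card_edgeFinset_inter_sym2_add_one_le hCne
  have hsplit := Set.ncard_sdiff_add_ncard_of_subset hAC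
  rw [← Set.ncard_eq_toFinset_card'] at hforest
  omega

end SimpleGraph

section Bootstrap

variable {V : Type} {G : SimpleGraph V} {t : V → ℕ}

theorem subset_bootStep (A : Set V) : A ⊆ bootStep G t A := Set.subset_union_left

theorem le_ncard_inter_neighborSet_of_mem_bootStep {A : Set V} {v : V}
    (hv : v ∈ bootStep G t A) (hvA : v ∉ A) : t v ≤ (A ∩ G.neighborSet v).ncard :=
  hv.resolve_left hvA

variable [Fintype V] [DecidableEq V] [DecidableRel G.Adj]

open scoped Classical in
theorem two_mul_ncard_bootStep_sdiff_le (ht : ∀ v, 2 ≤ t v) {A B : Set V}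
    (hB : 2 * (B \ A).ncard ≤ #(G.edgeFinset ∩ B.toFinset.sym2)) :
    2 * (bootStep G t B \ A).ncard ≤ #(G.edgeFinset ∩ (bootStep G t B).toFinset.sym2) := by
  set N := (bootStep G t B).toFinset \ B.toFinset
  have hunion : (bootStep G t B).toFinset = B.toFinset ∪ N :=
    (union_sdiff_of_subset (Set.toFinset_subset_toFinset.mpr (subset_bootStep B))).symm
  have hN : ∀ v ∈ N, 2 ≤ #{w ∈ B.toFinset | G.Adj v w} := by
    intro v hv
    rw [mem_sdiff, Set.mem_toFinset, Set.mem_toFinset] at hv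
    calc 2 ≤ t v := ht v
      _ ≤ (B ∩ G.neighborSet v).ncard := le_ncard_inter_neighborSet_of_mem_bootStep hv.1 hv.2
      _ = #{w ∈ B.toFinset | G.Adj v w} := by
        rw [Set.ncard_eq_toFinset_card']
        congr 1
        ext w
        simp
  have hdiff : (bootStep G t B \ A).ncard ≤ (B \ A).ncard + #N := by
    simp only [Set.ncard_eq_toFinset_card', Set.toFinset_sdiff, hunion]
    calc #((B.toFinset ∪ N) \ A.toFinset) ≤ #(B.toFinset \ A.toFinset ∪ N) := by
          rw [union_sdiff_distrib]
          gcongr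
          exact sdiff_subset
      _ ≤ _ := card_union_le _ _
  have hedges := card_edgeFinset_inter_sym2_add_two_mul_le (N := N) sdiff_disjoint hN
  rw [← hunion] at hedges
  omega

open scoped Classical in
theorem two_mul_ncard_iterate_bootStep_sdiff_le (ht : ∀ v, 2 ≤ t v) (A : Set V) (n : ℕ) :
    2 * ((bootStep G t)^[n] A \ A).ncard ≤
      #(G.edgeFinset ∩ ((bootStep G t)^[n] A).toFinset.sym2) := by
  induction n with
  | zero => simp
  | succ n ih =>
    rw [Function.iterate_succ_apply']
    exact two_mul_ncard_bootStep_sdiff_le ht ih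

end Bootstrap

/-- In a forest in which every vertex has threshold at least 2, a seed
set of size k ≥ 1 activates strictly fewer than k additional vertices. -/
theorem forest_spread_lt {V : Type} [Fintype V] (G : SimpleGraph V)
    (hforest : G.IsAcyclic) (t : V → ℕ) (ht : ∀ v, 2 ≤ t v)
    (A : Set V) (k : ℕ) (hA : A.ncard = k) (hk : 1 ≤ k) :
    (bootClosure G t A \ A).ncard < k := by
  classical
  obtain ⟨n, hn⟩ := Set.exists_iUnion_iterate_eq_of_finite subset_bootStep A
  have hAC : A ⊆ (bootStep G t)^[n] A :=
    hn ▸ Set.subset_iUnion (fun i => (bootStep G t)^[i] A) 0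
  have hAne : A.Nonempty := Set.nonempty_of_ncard_ne_zero (by omega)
  rw [bootClosure, hn, ← hA]
  exact hforest.ncard_sdiff_lt_of_two_mul_ncard_sdiff_le hAC hAne
    (two_mul_ncard_iterate_bootStep_sdiff_le ht A n)
end
end

section
/- Let F be a forest on N ≥ 1 vertices in which every vertex has bootstrap-percolation threshold 2. Then every contagious set of F, i.e. every set A ⊆ V(F) with ⟨A⟩ = V(F), satisfies |A| > N/2; equivalently m(F, 2) > N/2. -/
/-!
Track the potential `2|S| - e(S)`, where `e(S)` counts the edges of `F` inside the infected set
`S`. A newly infected vertex brings at least two edges to already infected vertices, so one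
round of percolation never increases the potential. Hence `2|A| ≥ 2|A| - e(A) ≥ 2N - e(F)`,
and a forest on `N ≥ 1` vertices has `e(F) ≤ N - 1` edges, so `2|A| ≥ N + 1`.
-/

noncomputable section

open Finset Function

namespace SimpleGraph

variable {V : Type} {G : SimpleGraph V}

theorem IsAcyclic.card_edgeFinset_lt [Fintype V] [Nonempty V] [Fintype G.edgeSet]
    (hG : G.IsAcyclic) : #G.edgeFinset < Fintype.card V := by
  classical
  obtain ⟨T, hGT, hT⟩ := (⊤ : SimpleGraph V).exists_maximal_isAcyclic_of_le_isAcyclic le_top hG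
  have hTree : T.IsTree := maximal_isAcyclic_iff_isTree.mp (by simpa using hT)
  calc #G.edgeFinset ≤ #T.edgeFinset := card_le_card (edgeFinset_mono hGT)
    _ < Fintype.card V := by have := hTree.card_edgeFinset; omega

section Interedges

variable [DecidableRel G.Adj]

theorem card_interedges_eq_sum (s t : Finset V) :
    #(G.interedges s t) = ∑ v ∈ s, #{u ∈ t | G.Adj v u} := by
  simp only [interedges_def, card_filter, sum_product]

theorem card_interedges_comm (s t : Finset V) :
    #(G.interedges s t) = #(G.interedges t s) :=
  have := G.symm
  Rel.card_interedges_comm s t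

theorem card_interedges_univ [Fintype V] :
    #(G.interedges univ univ) = 2 * #G.edgeFinset := by
  rw [card_interedges_eq_sum, ← sum_degrees_eq_twice_card_edges]
  simp only [← card_neighborFinset_eq_degree, neighborFinset_eq_filter]

variable [DecidableEq V]

theorem card_interedges_union_left {s₁ s₂ : Finset V} (h : Disjoint s₁ s₂) (t : Finset V) :
    #(G.interedges (s₁ ∪ s₂) t) = #(G.interedges s₁ t) + #(G.interedges s₂ t) := by
  simp only [card_interedges_eq_sum, sum_union h]

theorem card_interedges_union_right (s : Finset V) {t₁ t₂ : Finset V} (h : Disjoint t₁ t₂) :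
    #(G.interedges s (t₁ ∪ t₂)) = #(G.interedges s t₁) + #(G.interedges s t₂) := by
  simp only [card_interedges_eq_sum, filter_union, ← sum_add_distrib,
    card_union_of_disjoint (disjoint_filter_filter h)]

theorem card_interedges_add_le_of_two_le_neighbors {s n : Finset V} (hsn : Disjoint s n)
    (hn : ∀ v ∈ n, 2 ≤ #{u ∈ s | G.Adj v u}) :
    #(G.interedges s s) + 4 * #n ≤ #(G.interedges (s ∪ n) (s ∪ n)) := by
  have hns : 2 * #n ≤ #(G.interedges n s) := by
    rw [card_interedges_eq_sum, mul_comm, ← smul_eq_mul, ← sum_const]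
    exact sum_le_sum hn
  have := card_interedges_comm (G := G) s n
  rw [card_interedges_union_left hsn, card_interedges_union_right _ hsn,
    card_interedges_union_right _ hsn]
  omega

end Interedges

end SimpleGraph

open SimpleGraph

section Percolation

variable {V : Type} [Fintype V]

theorem exists_iterate_bootStep_eq_univ {G : SimpleGraph V} {t : V → ℕ} {A : Set V}
    (h : bootClosure G t A = Set.univ) : ∃ n, (bootStep G t)^[n] A = Set.univ := by
  have hmono : Monotone fun n => (bootStep G t)^[n] A :=
    monotone_nat_of_le_succ fun n => by
      rw [iterate_succ_apply']
      exact Set.subset_union_left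
  have hmem (v : V) : ∃ i, v ∈ (bootStep G t)^[i] A :=
    Set.mem_iUnion.mp (h ▸ Set.mem_univ v : v ∈ bootClosure G t A)
  choose idx hidx using hmem
  exact ⟨univ.sup idx, Set.eq_univ_of_forall fun v => hmono (le_sup (mem_univ v)) (hidx v)⟩

variable [DecidableEq V] (G : SimpleGraph V) [DecidableRel G.Adj] (t : V → ℕ)

def bootStepFinset (s : Finset V) : Finset V :=
  s ∪ ({v | t v ≤ #{u ∈ s | G.Adj v u}} : Finset V)

theorem semiconj_coe_bootStepFinset :
    Semiconj ((↑) : Finset V → Set V) (bootStepFinset G t) (bootStep G t) := by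
  intro s
  have hcard (v : V) : ((s : Set V) ∩ G.neighborSet v).ncard = #{u ∈ s | G.Adj v u} := by
    rw [← Set.ncard_coe_finset]
    congr 1
    ext u
    simp
  ext v
  simp [bootStep, bootStepFinset, hcard]

/-- `interedges s s` counts ordered pairs, so this is `2 (2|s| - e(s))`, with `e(s)` the number
of edges of `G` inside `s`. -/
def bootPotential (s : Finset V) : ℤ :=
  4 * #s - #(G.interedges s s)

theorem bootPotential_bootStepFinset_le (ht : ∀ v, 2 ≤ t v) (s : Finset V) :
    bootPotential G (bootStepFinset G t s) ≤ bootPotential G s := by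
  set n := bootStepFinset G t s \ s
  have hsplit : bootStepFinset G t s = s ∪ n := (union_sdiff_of_subset subset_union_left).symm
  have hn (v : V) (hv : v ∈ n) : 2 ≤ #{u ∈ s | G.Adj v u} := by
    obtain ⟨hv, hvs⟩ := mem_sdiff.mp hv
    simp only [bootStepFinset, mem_union, hvs, false_or, mem_filter, mem_univ, true_and] at hv
    exact (ht v).trans hv
  have hsn : Disjoint s n := disjoint_sdiff
  clear_value n
  have hgrow := card_interedges_add_le_of_two_le_neighbors hsn hn
  rw [bootPotential, bootPotential, hsplit, card_union_of_disjoint hsn]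
  omega

theorem bootPotential_iterate_bootStepFinset_le (ht : ∀ v, 2 ≤ t v) (s : Finset V) (n : ℕ) :
    bootPotential G ((bootStepFinset G t)^[n] s) ≤ bootPotential G s := by
  induction n with
  | zero => rfl
  | succ n ih =>
    rw [iterate_succ_apply']
    exact (bootPotential_bootStepFinset_le G t ht _).trans ih

end Percolation

/-- For a forest F on N ≥ 1 vertices under 2-neighbor bootstrap
percolation, every contagious set has size greater than N/2 (so m(F,2) > N/2). -/
theorem forest_contagious_set_large {V : Type} [Fintype V] (F : SimpleGraph V)
    (hforest : F.IsAcyclic) (hN : 1 ≤ Fintype.card V)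
    (A : Set V) (hA : bootClosure F (fun _ => 2) A = Set.univ) :
    (Fintype.card V : ℝ) / 2 < (A.ncard : ℝ) := by
  classical
  have : Nonempty V := Fintype.card_pos_iff.mp hN
  obtain ⟨n, hn⟩ := exists_iterate_bootStep_eq_univ hA
  have hfinal : (bootStepFinset F fun _ => 2)^[n] A.toFinset = univ := by
    apply coe_injective
    rw [(semiconj_coe_bootStepFinset F _).iterate_right n, Set.coe_toFinset, hn, coe_univ]
  have hpot := bootPotential_iterate_bootStepFinset_le F _ (fun _ => le_rfl) A.toFinset n
  rw [hfinal, bootPotential, bootPotential, card_univ, card_interedges_univ] at hpot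
  have hedges := hforest.card_edgeFinset_lt
  have hcard : Fintype.card V < A.ncard * 2 := by
    rw [Set.ncard_eq_toFinset_card']
    omega
  rw [div_lt_iff₀ two_pos]
  exact_mod_cast hcard
end
end

section
/- Let G = (V, E) be a graph and ℓ a nonnegative integer. Let H be the bipartite graph with vertex set V ⊔ W, where W = {w_e : e ∈ E}, and where for each edge e = (s, t) of G the vertex w_e is adjacent in H exactly to s and t. Consider 2-neighbor bootstrap percolation on H. Then G has a vertex cover of size at most ℓ if and only if there exists a set S ⊆ V ⊔ W with |S| ≤ ℓ such that, in the graph H − S obtained by deleting the vertices of S, no vertex of W ∖ S is infected from the seed set V ∖ S, i.e. ⟨V ∖ S⟩_{H−S} ∩ (W ∖ S) = ∅. -/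
noncomputable section

/-- The bipartite gadget `H` on `V ⊔ W`, `W = {w_e : e ∈ E(G)}`, where `w_e` is adjacent
exactly to the two endpoints of `e`. -/
def coverGadget {V : Type} (G : SimpleGraph V) : SimpleGraph (V ⊕ ↥G.edgeSet) :=
  SimpleGraph.fromRel (fun a b =>
    ∃ (v : V) (e : ↥G.edgeSet), a = Sum.inl v ∧ b = Sum.inr e ∧ v ∈ (e : Sym2 V))

lemma coverGadget_adj {V : Type} (G : SimpleGraph V) (v : V) (e : ↥G.edgeSet) :
    (coverGadget G).Adj (Sum.inr e) (Sum.inl v) ↔ v ∈ (e : Sym2 V) := by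
  simp only [coverGadget, SimpleGraph.fromRel_adj]
  constructor
  · rintro ⟨-, ⟨v', e', h1, h2, h3⟩ | ⟨v', e', h1, h2, h3⟩⟩
    · simp at h1
    · cases h1; cases h2; exact h3
  · intro h
    exact ⟨by simp, Or.inr ⟨v, e, rfl, rfl, h⟩⟩

lemma coverGadget_not_adj_inr {V : Type} (G : SimpleGraph V) (e e' : ↥G.edgeSet) :
    ¬ (coverGadget G).Adj (Sum.inr e) (Sum.inr e') := by
  simp only [coverGadget, SimpleGraph.fromRel_adj]
  rintro ⟨-, ⟨v', f, h1, h2, h3⟩ | ⟨v', f, h1, h2, h3⟩⟩ <;> simp_all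

/-- G has a vertex cover of size at most ℓ iff one can delete a set S
of at most ℓ vertices of the gadget H so that, under 2-neighbor bootstrap percolation on
H − S with seed set V ∖ S, no vertex of W ∖ S is infected. -/
theorem vertex_cover_iff_stopping_contagion {V : Type} [Fintype V]
    (G : SimpleGraph V) (ℓ : ℕ) :
    (∃ R : Set V, R.ncard ≤ ℓ ∧ ∀ ⦃u v : V⦄, G.Adj u v → u ∈ R ∨ v ∈ R) ↔
    (∃ S : Set (V ⊕ ↥G.edgeSet), S.ncard ≤ ℓ ∧
      ∀ x ∈ bootClosure ((coverGadget G).induce Sᶜ) (fun _ => 2)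
          {y : ↥Sᶜ | ∃ v : V, (y : V ⊕ ↥G.edgeSet) = Sum.inl v},
        ∃ v : V, (x : V ⊕ ↥G.edgeSet) = Sum.inl v) := by
  have hfin : Finite (V ⊕ ↥G.edgeSet) := by infer_instance
  constructor
  · rintro ⟨R, hRcard, hRcover⟩
    refine ⟨Sum.inl '' R, ?_, ?_⟩
    · rwa [Set.ncard_image_of_injective _ Sum.inl_injective]
    · set S : Set (V ⊕ ↥G.edgeSet) := Sum.inl '' R with hS
      set H := (coverGadget G).induce Sᶜ with hH
      set seed : Set ↥Sᶜ := {y : ↥Sᶜ | ∃ v : V, (y : V ⊕ ↥G.edgeSet) = Sum.inl v}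
        with hseed
      -- the neighbor set of any surviving edge-vertex is subsingleton
      have hsub : ∀ (e : ↥G.edgeSet) (he : (Sum.inr e : V ⊕ ↥G.edgeSet) ∈ Sᶜ),
          (H.neighborSet ⟨Sum.inr e, he⟩).Subsingleton := by
        intro e he y1 hy1 y2 hy2
        have hadj1 : (coverGadget G).Adj (Sum.inr e) (y1 : V ⊕ ↥G.edgeSet) := hy1
        have hadj2 : (coverGadget G).Adj (Sum.inr e) (y2 : V ⊕ ↥G.edgeSet) := hy2
        obtain ⟨v1, hv1⟩ : ∃ v : V, (y1 : V ⊕ ↥G.edgeSet) = Sum.inl v := by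
          rcases h : (y1 : V ⊕ ↥G.edgeSet) with v | e'
          · exact ⟨v, rfl⟩
          · rw [h] at hadj1; exact absurd hadj1 (coverGadget_not_adj_inr G e e')
        obtain ⟨v2, hv2⟩ : ∃ v : V, (y2 : V ⊕ ↥G.edgeSet) = Sum.inl v := by
          rcases h : (y2 : V ⊕ ↥G.edgeSet) with v | e'
          · exact ⟨v, rfl⟩
          · rw [h] at hadj2; exact absurd hadj2 (coverGadget_not_adj_inr G e e')
        rw [hv1, coverGadget_adj] at hadj1
        rw [hv2, coverGadget_adj] at hadj2
        have hv1R : v1 ∉ R := by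
          have := y1.2
          rw [hv1] at this
          intro hmem; exact this ⟨v1, hmem, rfl⟩
        have hv2R : v2 ∉ R := by
          have := y2.2
          rw [hv2] at this
          intro hmem; exact this ⟨v2, hmem, rfl⟩
        have hveq : v1 = v2 := by
          by_contra hne
          have heq : (e : Sym2 V) = s(v1, v2) := (Sym2.mem_and_mem_iff hne).mp ⟨hadj1, hadj2⟩
          have hadj : G.Adj v1 v2 := by
            have h2 := e.2
            rw [heq] at h2
            exact h2
          rcases hRcover hadj with h | h
          · exact hv1R h
          · exact hv2R h
        exact Subtype.ext (by rw [hv1, hv2, hveq])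
      have hstep : ∀ A : Set ↥Sᶜ, A ⊆ seed → bootStep H (fun _ => 2) A ⊆ seed := by
        intro A hA x hx
        rcases hx with hx | hx
        · exact hA hx
        · rcases h : (x : V ⊕ ↥G.edgeSet) with v | e
          · exact ⟨v, h⟩
          · exfalso
            have hxe : x = ⟨Sum.inr e, h ▸ x.2⟩ := Subtype.ext h
            have hcard : (A ∩ H.neighborSet x).ncard ≤ 1 := by
              have hss : (A ∩ H.neighborSet x).Subsingleton := by
                rw [hxe]
                exact (hsub e _).anti Set.inter_subset_right
              rcases hss.eq_empty_or_singleton with h' | ⟨a, h'⟩ <;> simp [h']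
            have : (2 : ℕ) ≤ (A ∩ H.neighborSet x).ncard := hx
            omega
      have hiter : ∀ i, (bootStep H (fun _ => 2))^[i] seed ⊆ seed := by
        intro i
        induction i with
        | zero => exact le_refl _
        | succ n ih =>
            rw [Function.iterate_succ_apply']
            exact hstep _ ih
      intro x hx
      obtain ⟨i, hi⟩ := Set.mem_iUnion.mp hx
      exact hiter i hi
  · rintro ⟨S, hScard, hSstop⟩
    refine ⟨(Sum.elim (id : V → V) (fun e : ↥G.edgeSet => (e : Sym2 V).out.1)) '' S, ?_, ?_⟩
    · exact le_trans (Set.ncard_image_le S.toFinite) hScard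
    · intro u v huv
      by_cases hu : (Sum.inl u : V ⊕ ↥G.edgeSet) ∈ S
      · exact Or.inl ⟨Sum.inl u, hu, rfl⟩
      by_cases hv : (Sum.inl v : V ⊕ ↥G.edgeSet) ∈ S
      · exact Or.inr ⟨Sum.inl v, hv, rfl⟩
      set e : ↥G.edgeSet := ⟨s(u, v), huv⟩ with he_def
      by_cases he : (Sum.inr e : V ⊕ ↥G.edgeSet) ∈ S
      · have hmem : (e : Sym2 V).out.1 ∈ (e : Sym2 V) := Sym2.out_fst_mem _
        rcases Sym2.mem_iff.mp hmem with h | h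
        · exact Or.inl ⟨Sum.inr e, he, h⟩
        · exact Or.inr ⟨Sum.inr e, he, h⟩
      · exfalso
        set H := (coverGadget G).induce Sᶜ with hH
        set seed : Set ↥Sᶜ := {y : ↥Sᶜ | ∃ w : V, (y : V ⊕ ↥G.edgeSet) = Sum.inl w}
          with hseed
        set x : ↥Sᶜ := ⟨Sum.inr e, he⟩ with hx_def
        set yu : ↥Sᶜ := ⟨Sum.inl u, hu⟩ with hyu_def
        set yv : ↥Sᶜ := ⟨Sum.inl v, hv⟩ with hyv_def
        have hadju : H.Adj x yu := (coverGadget_adj G u e).mpr (by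
          rw [he_def]; exact Sym2.mem_mk_left u v)
        have hadjv : H.Adj x yv := (coverGadget_adj G v e).mpr (by
          rw [he_def]; exact Sym2.mem_mk_right u v)
        have hne : yu ≠ yv := by
          intro h
          have := congrArg Subtype.val h
          simp [hyu_def, hyv_def] at this
          exact huv.ne this
        have hpair : ({yu, yv} : Set ↥Sᶜ) ⊆ seed ∩ H.neighborSet x := by
          rintro y (rfl | rfl)
          · exact ⟨⟨u, rfl⟩, hadju⟩
          · exact ⟨⟨v, rfl⟩, hadjv⟩
        have h2 : (2 : ℕ) ≤ (seed ∩ H.neighborSet x).ncard := by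
          calc (2 : ℕ) = ({yu, yv} : Set ↥Sᶜ).ncard := (Set.ncard_pair hne).symm
            _ ≤ _ := Set.ncard_le_ncard hpair (Set.toFinite _)
        have hxmem : x ∈ bootClosure H (fun _ => 2) seed := by
          apply Set.mem_iUnion.mpr ⟨1, ?_⟩
          rw [Function.iterate_one]
          exact Or.inr h2
        obtain ⟨w, hw⟩ := hSstop x hxmem
        simp [hx_def] at hw
end
end

section
/- Let G be a graph in which every vertex has a bootstrap-percolation threshold at least 2, let A be a seed set, and let B = ⟨A⟩ ∖ A. Then the subgraph of G induced on A ∪ B contains at least 2·|B| edges. -/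
noncomputable section

/-- If every vertex has threshold at least 2, `A` is a seed set and
`B = ⟨A⟩ ∖ A`, then the subgraph of `G` induced on `A ∪ B` has at least `2·|B|` edges. -/
theorem edges_of_infected_lower_bound {V : Type} [Fintype V] (G : SimpleGraph V)
    (t : V → ℕ) (ht : ∀ v, 2 ≤ t v) (A : Set V) :
    2 * (bootClosure G t A \ A).ncard ≤
      (G.induce (A ∪ bootClosure G t A \ A)).edgeSet.ncard := by
  classical
  set F : ℕ → Set V := fun i => (bootStep G t)^[i] A with hF
  have hmono : Monotone F := by
    apply monotone_nat_of_le_succ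
    intro i
    have h : F (i + 1) = bootStep G t (F i) := by
      simp [hF, Function.iterate_succ_apply']
    rw [h]
    exact Set.subset_union_left
  have hclos : bootClosure G t A = ⋃ i, F i := rfl
  set B := bootClosure G t A \ A with hB
  set S := A ∪ B with hS
  have hFS : ∀ i, F i ⊆ S := by
    intro i v hv
    by_cases hvA : v ∈ A
    · exact Or.inl hvA
    · refine Or.inr ⟨?_, hvA⟩
      rw [hclos]
      exact Set.mem_iUnion.2 ⟨i, hv⟩
  have key : ∀ b, b ∈ B → ∃ n x y, x ∈ F n ∧ y ∈ F n ∧ G.Adj b x ∧ G.Adj b y ∧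
      x ≠ y ∧ b ∉ F n := by
    intro b hb
    obtain ⟨hbc, hbA⟩ := hb
    rw [hclos, Set.mem_iUnion] at hbc
    have hex : ∃ i, b ∈ F i := hbc
    have hbm : b ∈ F (Nat.find hex) := Nat.find_spec hex
    have hm0 : Nat.find hex ≠ 0 := by
      intro h
      rw [h] at hbm
      exact hbA hbm
    obtain ⟨n, hn⟩ := Nat.exists_eq_succ_of_ne_zero hm0
    have hbn : b ∉ F n := Nat.find_min hex (by omega)
    rw [hn] at hbm
    have hstep : F (n + 1) = bootStep G t (F n) := by
      simp [hF, Function.iterate_succ_apply']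
    rw [hstep] at hbm
    rcases hbm with h | h
    · exact absurd h hbn
    · have h2 : 2 ≤ (F n ∩ G.neighborSet b).ncard := le_trans (ht b) h
      obtain ⟨x, hx, y, hy, hne⟩ := (Set.one_lt_ncard (s := F n ∩ G.neighborSet b) (Set.toFinite _)).1 (by omega)
      exact ⟨n, x, y, hx.1, hy.1, hx.2, hy.2, hne, hbn⟩
  choose n u₁ u₂ hu1F hu2F hadj1 hadj2 hne hbF using key
  -- the chosen neighbor, by a boolean index
  set w : ∀ b, b ∈ B → Bool → V := fun b hb i => if i then u₁ b hb else u₂ b hb with hw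
  have hwF : ∀ b hb i, w b hb i ∈ F (n b hb) := by
    intro b hb i; cases i <;> simp [hw, hu1F, hu2F]
  have hwAdj : ∀ b hb i, G.Adj b (w b hb i) := by
    intro b hb i; cases i <;> simp [hw, hadj1, hadj2]
  have hwS : ∀ b hb i, w b hb i ∈ S := fun b hb i => hFS _ (hwF b hb i)
  have hbS : ∀ b, b ∈ B → b ∈ S := fun b hb => Or.inr hb
  have hwne : ∀ b hb (i j : Bool), i ≠ j → w b hb i ≠ w b hb j := by
    intro b hb i j hij
    cases i <;> cases j
    · exact absurd rfl hij
    · simpa [hw] using (hne b hb).symm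
    · simpa [hw] using hne b hb
    · exact absurd rfl hij
  set emb : ↥B × Bool → Sym2 ↥S := fun p =>
    s(⟨(p.1 : V), hbS _ p.1.2⟩, ⟨w p.1 p.1.2 p.2, hwS _ p.1.2 p.2⟩) with hemb
  have hinj : Function.Injective emb := by
    rintro ⟨⟨b, hb⟩, i⟩ ⟨⟨b', hb'⟩, j⟩ h
    simp only [hemb, Sym2.eq_iff, Subtype.mk.injEq] at h
    rcases h with ⟨h1, h2⟩ | ⟨h1, h2⟩
    · subst h1
      have : i = j := by
        by_contra hij
        exact hwne b hb i j hij h2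
      subst this
      rfl
    · exfalso
      have hb'F : b' ∈ F (n b hb) := h2 ▸ hwF b hb i
      have hbF' : b ∈ F (n b' hb') := h1 ▸ hwF b' hb' j
      rcases le_total (n b hb) (n b' hb') with hle | hle
      · exact hbF b' hb' (hmono hle hb'F)
      · exact hbF b hb (hmono hle hbF')
  have hrange : Set.range emb ⊆ (G.induce S).edgeSet := by
    rintro e ⟨⟨⟨b, hb⟩, i⟩, rfl⟩
    simp only [hemb, SimpleGraph.mem_edgeSet]
    exact hwAdj b hb i
  have hcard1 : Nat.card (↥B × Bool) = 2 * B.ncard := by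
    rw [Nat.card_prod, Nat.card_eq_fintype_card (α := Bool), Fintype.card_bool,
      Nat.card_coe_set_eq]
    ring
  have hcard2 : Nat.card (↥B × Bool) = (Set.range emb).ncard := by
    rw [← Nat.card_coe_set_eq]
    exact (Nat.card_range_of_injective hinj).symm
  calc 2 * B.ncard = (Set.range emb).ncard := by rw [← hcard1, hcard2]
    _ ≤ (G.induce S).edgeSet.ncard := Set.ncard_le_ncard hrange (Set.toFinite _)
end
end
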